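/- (Opposition of interest.) Let I be a school matching instance, let M,M'∈S(I), and let ab∈(M∖M')∩(A×B). Then either (1) M(a) ≻_a M'(a) and b prefers M'(b) to M(b), or (2) M'(a) ≻_a M(a) and b prefers M(b) to M'(b). -/

import Mathlib

open Classical
open scoped ENNReal

noncomputable section

namespace SM

/-- A school matching instance: students `A`, schools `B`, strict preference
orders over the other side plus the outside option `∅` (encoded as `none`),
and quotas `q b ≤ |A|`. -/
structure SchoolInstance (A B : Type) [Fintype A] [Fintype B] where
  prefA : A → Option B → Option B → Prop
  prefB : B → Option A → Option A → Prop
  prefA_sto : ∀ a, IsStrictTotalOrder (Option B) (prefA a)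
  prefB_sto : ∀ b, IsStrictTotalOrder (Option A) (prefB b)
  q : B → ℕ
  q_le : ∀ b, q b ≤ Fintype.card A

variable {A B : Type} [Fintype A] [Fintype B] [DecidableEq A] [DecidableEq B]

/-- A matching: every student is assigned a school or the outside option, and
each school receives at most `q b` students.  (A school is implicitly paired
with the outside option exactly when it has strictly fewer than `q b`
students, and a student is paired with the outside option exactly when it has
no school; this determines the set of pairs of the matching.) -/
structure Matching {A B : Type} [Fintype A] [Fintype B] (I : SchoolInstance A B) where
  toFun : A → Option B
  quota : ∀ b : B, (Finset.univ.filter fun a => toFun a = some b).card ≤ I.q b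

instance (I : SchoolInstance A B) : Nonempty (Matching I) := by
  refine ⟨⟨fun _ => none, fun b => ?_⟩⟩
  have h : (Finset.univ.filter fun _ : A => (none : Option B) = some b) = ∅ :=
    Finset.filter_false_of_mem (by intro a _; simp)
  rw [h, Finset.card_empty]
  exact Nat.zero_le _

/-- The students assigned to school `b`. -/
def assignedTo (I : SchoolInstance A B) (M : Matching I) (b : B) : Finset A :=
  Finset.univ.filter fun a => M.toFun a = some b

/-- School `b` has strictly fewer than `q b` students, i.e. is also paired
with the outside option. -/
def hasSlack (I : SchoolInstance A B) (M : Matching I) (b : B) : Prop :=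
  (assignedTo I M b).card < I.q b

/-- `x ∈ M(b)`: the partners of school `b` (students assigned to it, plus the
outside option when it is under quota). -/
def inPartners (I : SchoolInstance A B) (M : Matching I) (b : B) (x : Option A) : Prop :=
  (∃ a : A, x = some a ∧ M.toFun a = some b) ∨ (x = none ∧ hasSlack I M b)

/-- `M(b)` as a set. -/
def partnersSet (I : SchoolInstance A B) (M : Matching I) (b : B) : Set (Option A) :=
  {x | inPartners I M b x}

/-- The pair `ab` blocks `M`. -/
def BlocksPair (I : SchoolInstance A B) (M : Matching I) (a : A) (b : B) : Prop :=
  I.prefA a (some b) (M.toFun a) ∧ ∃ x, inPartners I M b x ∧ I.prefB b (some a) x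

/-- Student `a` blocks `M` (prefers the outside option to its partner). -/
def BlocksStudent (I : SchoolInstance A B) (M : Matching I) (a : A) : Prop :=
  I.prefA a none (M.toFun a)

/-- School `b` blocks `M` (prefers the outside option to one of its partners). -/
def BlocksSchool (I : SchoolInstance A B) (M : Matching I) (b : B) : Prop :=
  ∃ a : A, M.toFun a = some b ∧ I.prefB b none (some a)

/-- Stability: no blocking pair and no blocking agent. -/
def Stable (I : SchoolInstance A B) (M : Matching I) : Prop :=
  (¬ ∃ a b, BlocksPair I M a b) ∧ (¬ ∃ a, BlocksStudent I M a) ∧ (¬ ∃ b, BlocksSchool I M b)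

/-- `M ≥ M'`: every student weakly prefers `M` to `M'`. -/
def matGE (I : SchoolInstance A B) (M M' : Matching I) : Prop :=
  ∀ a : A, M.toFun a = M'.toFun a ∨ I.prefA a (M.toFun a) (M'.toFun a)

/-- `M' < M` in the student order. -/
def matLT (I : SchoolInstance A B) (M' M : Matching I) : Prop :=
  matGE I M M' ∧ M'.toFun ≠ M.toFun

/-- `M'` is an immediate predecessor of `M` in `(S(I), ≥)`. -/
def ImmPred (I : SchoolInstance A B) (M' M : Matching I) : Prop :=
  Stable I M' ∧ Stable I M ∧ matLT I M' M ∧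
    ¬ ∃ M'' : Matching I, Stable I M'' ∧ matLT I M' M'' ∧ matLT I M'' M

/-- The type in which rotations live: pairs `(ρ₊, ρ₋)` of sets of
student/school pairs (with the outside option allowed on either side). -/
abbrev Rot (A B : Type) : Type :=
  Finset (Option A × Option B) × Finset (Option A × Option B)

/-- The set of pairs of a matching: each student with its partner, and each
under-quota school with the outside option. -/
def pairsOf (I : SchoolInstance A B) (M : Matching I) : Finset (Option A × Option B) :=
  Finset.univ.filter fun p =>
    (∃ a : A, p = (some a, M.toFun a)) ∨ (∃ b : B, hasSlack I M b ∧ p = (none, some b))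

/-- The rotation `ρ(M, M') = (M ∖ M', M' ∖ M)`. -/
def rho (I : SchoolInstance A B) (M M' : Matching I) : Rot A B :=
  (pairsOf I M \ pairsOf I M', pairsOf I M' \ pairsOf I M)

/-- `R(I)`: the set of all rotations of `I`. -/
def RotSet (I : SchoolInstance A B) : Set (Rot A B) :=
  {r | ∃ M M' : Matching I, ImmPred I M' M ∧ r = rho I M M'}

/-- `c` is a maximal chain of stable matchings from `M0` down to `M`:
consecutive entries are immediate predecessors. -/
def chainTo (I : SchoolInstance A B) (M0 M : Matching I) (c : List (Matching I)) : Prop :=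
  c.head? = some M0 ∧ c.getLast? = some M ∧ (∀ N ∈ c, Stable I N) ∧
    List.Chain' (fun X Y => ImmPred I Y X) c

/-- The set of rotations eliminated along the chain `c`. -/
def chainRots (I : SchoolInstance A B) (c : List (Matching I)) : Set (Rot A B) :=
  {r | ∃ (i : ℕ) (X Y : Matching I), getElem? c i = some X ∧ getElem? c (i + 1) = some Y ∧ r = rho I X Y}

/-- `ρ` is exposed in `M`. -/
def Exposed (I : SchoolInstance A B) (r : Rot A B) (M : Matching I) : Prop :=
  ∃ M', ImmPred I M' M ∧ r = rho I M M'

/-- The rotation poset `ρ ⊵ ρ'` (relative to the rotation-set map `RM`):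
either `ρ = ρ'`, or `ρ ∈ R_M` for every stable `M` in which `ρ'` is exposed. -/
def domRel (I : SchoolInstance A B) (RM : Matching I → Set (Rot A B)) (r r' : Rot A B) : Prop :=
  r = r' ∨ ∀ M, Stable I M → Exposed I r' M → r ∈ RM M

/-- `ρ ▷ ρ'`. -/
def strictDom (I : SchoolInstance A B) (RM : Matching I → Set (Rot A B)) (r r' : Rot A B) : Prop :=
  domRel I RM r r' ∧ r ≠ r'

/-- `R ⊆ R(I)` is upper-closed in the rotation poset. -/
def UpperClosed (I : SchoolInstance A B) (RM : Matching I → Set (Rot A B))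
    (R : Set (Rot A B)) : Prop :=
  R ⊆ RotSet I ∧ ∀ r' ∈ R, ∀ r ∈ RotSet I, domRel I RM r r' → r ∈ R

/-- `N` is the join `M ∨ M'` (least upper bound) in `(S(I), ≥)`. -/
def IsJoin (I : SchoolInstance A B) (M M' N : Matching I) : Prop :=
  Stable I N ∧ matGE I N M ∧ matGE I N M' ∧
    ∀ P, Stable I P → matGE I P M → matGE I P M' → matGE I P N

/-- `N` is the meet `M ∧ M'` (greatest lower bound) in `(S(I), ≥)`. -/
def IsMeet (I : SchoolInstance A B) (M M' N : Matching I) : Prop :=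
  Stable I N ∧ matGE I M N ∧ matGE I M' N ∧
    ∀ P, Stable I P → matGE I M P → matGE I M' P → matGE I N P

/-- `F` is a (nonempty) sublattice of the lattice of stable matchings. -/
def IsSublattice (I : SchoolInstance A B) (F : Set (Matching I)) : Prop :=
  F.Nonempty ∧ (∀ M ∈ F, Stable I M) ∧
    (∀ M ∈ F, ∀ M' ∈ F, ∃ N ∈ F, IsJoin I M M' N) ∧
    (∀ M ∈ F, ∀ M' ∈ F, ∃ N ∈ F, IsMeet I M M' N)

/-- `ρ ~ ρ'`: the two rotations are eliminated together in every matching of `F`. -/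
def rotEquiv (I : SchoolInstance A B) (RM : Matching I → Set (Rot A B))
    (F : Set (Matching I)) (r r' : Rot A B) : Prop :=
  ∀ M ∈ F, (r ∈ RM M ↔ r' ∈ RM M)

/-- The trivial meta-rotation `θ₀^F` of rotations eliminated in every matching of `F`. -/
def theta0 (I : SchoolInstance A B) (RM : Matching I → Set (Rot A B))
    (F : Set (Matching I)) : Set (Rot A B) :=
  {r | r ∈ RotSet I ∧ ∀ M ∈ F, r ∈ RM M}

/-- The trivial meta-rotation `θ_z^F` of rotations eliminated in no matching of `F`. -/
def thetaZ (I : SchoolInstance A B) (RM : Matching I → Set (Rot A B))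
    (F : Set (Matching I)) : Set (Rot A B) :=
  {r | r ∈ RotSet I ∧ ∀ M ∈ F, r ∉ RM M}

/-- `θ` is a meta-rotation of `F` (an equivalence class of `~`). -/
def IsMetaRot (I : SchoolInstance A B) (RM : Matching I → Set (Rot A B))
    (F : Set (Matching I)) (θ : Set (Rot A B)) : Prop :=
  ∃ r ∈ RotSet I, θ = {r' | r' ∈ RotSet I ∧ rotEquiv I RM F r r'}

/-- `θ` is a proper meta-rotation of `F`. -/
def IsProperMeta (I : SchoolInstance A B) (RM : Matching I → Set (Rot A B))
    (F : Set (Matching I)) (θ : Set (Rot A B)) : Prop :=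
  IsMetaRot I RM F θ ∧ θ ≠ theta0 I RM F ∧ θ ≠ thetaZ I RM F

/-- `θ ⊵^F θ'` on (proper) meta-rotations. -/
def metaDom (I : SchoolInstance A B) (RM : Matching I → Set (Rot A B))
    (F : Set (Matching I)) (θ θ' : Set (Rot A B)) : Prop :=
  ∀ M ∈ F, θ' ⊆ RM M → θ ⊆ RM M

/-- `Θ_M`: the set of proper meta-rotations contained in `R_M`. -/
def ThetaM (I : SchoolInstance A B) (RM : Matching I → Set (Rot A B))
    (F : Set (Matching I)) (M : Matching I) : Set (Set (Rot A B)) :=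
  {θ | IsProperMeta I RM F θ ∧ θ ⊆ RM M}

/-- `Θ` is an upper-closed set of proper meta-rotations. -/
def UCProper (I : SchoolInstance A B) (RM : Matching I → Set (Rot A B))
    (F : Set (Matching I)) (Θ : Set (Set (Rot A B))) : Prop :=
  (∀ θ ∈ Θ, IsProperMeta I RM F θ) ∧
    ∀ θ' ∈ Θ, ∀ θ, IsProperMeta I RM F θ → metaDom I RM F θ θ' → θ ∈ Θ

/-- `M_R`: the stable matching whose rotation set is `R` (via definite description). -/
def MofR (I : SchoolInstance A B) (RM : Matching I → Set (Rot A B))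
    (R : Set (Rot A B)) : Matching I :=
  Classical.epsilon fun M => Stable I M ∧ RM M = R

/-- `R^θ = θ₀^F ∪ ⋃ {θ' proper : θ' ⊵^F θ}`. -/
def Rup (I : SchoolInstance A B) (RM : Matching I → Set (Rot A B))
    (F : Set (Matching I)) (θ : Set (Rot A B)) : Set (Rot A B) :=
  theta0 I RM F ∪ ⋃₀ {θ' | IsProperMeta I RM F θ' ∧ metaDom I RM F θ' θ}

/-- `R_θ = θ₀^F ∪ ⋃ {θ' proper : θ' ▷^F θ}`. -/
def Rdn (I : SchoolInstance A B) (RM : Matching I → Set (Rot A B))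
    (F : Set (Matching I)) (θ : Set (Rot A B)) : Set (Rot A B) :=
  theta0 I RM F ∪ ⋃₀ {θ' | IsProperMeta I RM F θ' ∧ metaDom I RM F θ' θ ∧ θ' ≠ θ}

/-- `M^θ`. -/
def Mup (I : SchoolInstance A B) (RM : Matching I → Set (Rot A B))
    (F : Set (Matching I)) (θ : Set (Rot A B)) : Matching I :=
  MofR I RM (Rup I RM F θ)

/-- `M_θ`. -/
def Mdn (I : SchoolInstance A B) (RM : Matching I → Set (Rot A B))
    (F : Set (Matching I)) (θ : Set (Rot A B)) : Matching I :=
  MofR I RM (Rdn I RM F θ)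

/-- The meet `M ∧ M'` in the lattice of stable matchings (via definite description). -/
def meetM (I : SchoolInstance A B) (M M' : Matching I) : Matching I :=
  Classical.epsilon fun N => IsMeet I M M' N

/-- First order differential `∂f_θ = f(M^θ) − f(M_θ)`. -/
def d1 (I : SchoolInstance A B) (RM : Matching I → Set (Rot A B))
    (F : Set (Matching I)) (f : Matching I → ℝ) (θ : Set (Rot A B)) : ℝ :=
  f (Mup I RM F θ) - f (Mdn I RM F θ)

/-- Second order differential
`∂²f_{θ,θ'} = f(M^θ ∧ M_{θ'}) + f(M_θ ∧ M^{θ'}) − f(M_θ ∧ M_{θ'}) − f(M^θ ∧ M^{θ'})`. -/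
def d2 (I : SchoolInstance A B) (RM : Matching I → Set (Rot A B))
    (F : Set (Matching I)) (f : Matching I → ℝ) (θ θ' : Set (Rot A B)) : ℝ :=
  f (meetM I (Mup I RM F θ) (Mdn I RM F θ')) + f (meetM I (Mdn I RM F θ) (Mup I RM F θ'))
    - f (meetM I (Mdn I RM F θ) (Mdn I RM F θ')) - f (meetM I (Mup I RM F θ) (Mup I RM F θ'))

/-- The greatest element `M₀^F` of `F` (via definite description). -/
def topF (I : SchoolInstance A B) (F : Set (Matching I)) : Matching I :=
  Classical.epsilon fun N => N ∈ F ∧ ∀ P ∈ F, matGE I N P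

/-- Vertices of the digraph: all rotations, plus a source `s` and sink `t`. -/
abbrev Vtx (A B : Type) : Type := Rot A B ⊕ Bool

/-- The source `s`. -/
def srcV : Vtx A B := Sum.inr true

/-- The sink `t`. -/
def tgtV : Vtx A B := Sum.inr false

/-- The value of the cut `S` for the capacity function `u`: the total capacity
of the arcs leaving `S`. -/
def cutVal (u : Vtx A B → Vtx A B → ℝ≥0∞) (S : Set (Vtx A B)) : ℝ≥0∞ :=
  ∑ p : Vtx A B × Vtx A B, if p.1 ∈ S ∧ p.2 ∉ S then u p.1 p.2 else 0

/-- The `s`-`t` cut `{s} ∪ R`. -/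
def cutOf (R : Set (Rot A B)) : Set (Vtx A B) := insert srcV (Sum.inl '' R)

/-- `(u, C)` witnesses minimum cut representability of `Π(f, F)`: for every
`R ⊆ R(I)`, the cut `{s} ∪ R` has finite capacity iff `R` is upper-closed and
`M_R ∈ F`, and in that case its value is `f(M_R) + C`. -/
def MinCutRepWith (I : SchoolInstance A B) (RM : Matching I → Set (Rot A B))
    (F : Set (Matching I)) (f : Matching I → ℝ)
    (u : Vtx A B → Vtx A B → ℝ≥0∞) (C : ℝ) : Prop :=
  ∀ R : Set (Rot A B), R ⊆ RotSet I →
    ((cutVal u (cutOf R) ≠ ⊤ ↔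
        (UpperClosed I RM R ∧ ∃ M, Stable I M ∧ RM M = R ∧ M ∈ F)) ∧
      (∀ M, Stable I M → RM M = R → M ∈ F → (cutVal u (cutOf R)).toReal = f M + C))

/-- The problem `Π(f, F)` is minimum cut representable. -/
def MinCutRep (I : SchoolInstance A B) (RM : Matching I → Set (Rot A B))
    (F : Set (Matching I)) (f : Matching I → ℝ) : Prop :=
  ∃ u C, MinCutRepWith I RM F f u C

/-- The cut digraph `D^{f,F}` (with representative rotations `rep` and
constant `γ`); capacities of parallel arcs are added. -/
def cutDigraph (I : SchoolInstance A B) (RM : Matching I → Set (Rot A B))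
    (F : Set (Matching I)) (f : Matching I → ℝ)
    (rep : Set (Rot A B) → Rot A B) (γ : ℝ) : Vtx A B → Vtx A B → ℝ≥0∞ :=
  fun x y =>
    (if ∃ θ, IsMetaRot I RM F θ ∧ ∃ r ∈ θ, ∃ r' ∈ θ, r ≠ r' ∧ x = Sum.inl r ∧ y = Sum.inl r'
      then ⊤ else 0)
    + (if ∃ θ θ', IsProperMeta I RM F θ ∧ IsProperMeta I RM F θ' ∧ θ ≠ θ' ∧
          metaDom I RM F θ' θ ∧ x = Sum.inl (rep θ) ∧ y = Sum.inl (rep θ')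
        then ⊤ else 0)
    + (∑ θ : Set (Rot A B), ∑ θ' : Set (Rot A B),
        if IsProperMeta I RM F θ ∧ IsProperMeta I RM F θ' ∧ θ ≠ θ' ∧
            x = Sum.inl (rep θ) ∧ y = Sum.inl (rep θ')
        then ENNReal.ofReal ((1 / 2) * d2 I RM F f θ θ') else 0)
    + (if (theta0 I RM F).Nonempty ∧ x = srcV ∧ y = Sum.inl (rep (theta0 I RM F))
        then ⊤ else 0)
    + (if (thetaZ I RM F).Nonempty ∧ x = Sum.inl (rep (thetaZ I RM F)) ∧ y = tgtV
        then ⊤ else 0)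
    + (∑ θ : Set (Rot A B),
        if IsProperMeta I RM F θ ∧ x = Sum.inl (rep θ) ∧ y = tgtV
        then ENNReal.ofReal (d1 I RM F f θ -
          (1 / 2) * (∑ θ' : Set (Rot A B),
            if IsProperMeta I RM F θ' ∧ θ' ≠ θ then d2 I RM F f θ θ' else 0) + γ)
        else 0)
    + (∑ θ : Set (Rot A B),
        if IsProperMeta I RM F θ ∧ x = srcV ∧ y = Sum.inl (rep θ)
        then ENNReal.ofReal γ else 0)

/-- `b` prefers `S'` to `S''`: every member of `S'` is preferred to every
member of `S'' ∖ S'`. -/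
def prefersSet (I : SchoolInstance A B) (b : B) (S' S'' : Set (Option A)) : Prop :=
  ∀ x ∈ S', ∀ y ∈ S'', y ∉ S' → I.prefB b x y

/-- `A(ρ)`: students appearing in `ρ₊`. -/
def Aof (r : Rot A B) : Set A := {a | ∃ b : B, (some a, some b) ∈ r.1}

/-- `B(ρ)`: schools appearing in `ρ₊`. -/
def Bof (r : Rot A B) : Set B := {b | ∃ a : A, (some a, some b) ∈ r.1}

/-- `ρ₊(b)`: students matched to `b` in `ρ₊`. -/
def rhoPlusB (r : Rot A B) (b : B) : Set A := {a | (some a, some b) ∈ r.1}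

/-- `R^ρ = {ρ' : ρ' ⊵ ρ}`. -/
def RupRot (I : SchoolInstance A B) (RM : Matching I → Set (Rot A B))
    (r : Rot A B) : Set (Rot A B) :=
  {r' | r' ∈ RotSet I ∧ domRel I RM r' r}

/-- `R_ρ = {ρ' : ρ' ▷ ρ}`. -/
def RdnRot (I : SchoolInstance A B) (RM : Matching I → Set (Rot A B))
    (r : Rot A B) : Set (Rot A B) :=
  {r' | r' ∈ RotSet I ∧ strictDom I RM r' r}

/-- `M^ρ`. -/
def MupRot (I : SchoolInstance A B) (RM : Matching I → Set (Rot A B))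
    (r : Rot A B) : Matching I :=
  MofR I RM (RupRot I RM r)

/-- `M_ρ`. -/
def MdnRot (I : SchoolInstance A B) (RM : Matching I → Set (Rot A B))
    (r : Rot A B) : Matching I :=
  MofR I RM (RdnRot I RM r)

/-- First order differential of `f` at a rotation: `∂f_ρ = f(M^ρ) − f(M_ρ)`. -/
def d1Rot (I : SchoolInstance A B) (RM : Matching I → Set (Rot A B))
    (f : Matching I → ℝ) (r : Rot A B) : ℝ :=
  f (MupRot I RM r) - f (MdnRot I RM r)

/-- Second order differential of `f` at a pair of distinct rotations. -/
def d2Rot (I : SchoolInstance A B) (RM : Matching I → Set (Rot A B))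
    (f : Matching I → ℝ) (r r' : Rot A B) : ℝ :=
  f (meetM I (MupRot I RM r) (MdnRot I RM r')) + f (meetM I (MdnRot I RM r) (MupRot I RM r'))
    - f (meetM I (MdnRot I RM r) (MdnRot I RM r'))
    - f (meetM I (MupRot I RM r) (MupRot I RM r'))

/-- The pair `(ρ_in, ρ_out)` characterizes the stable matchings assigning both
siblings `a, ā` to school `b`. -/
def siblingChar (I : SchoolInstance A B) (RM : Matching I → Set (Rot A B))
    (a abar : A) (b : B) (p : Rot A B × Rot A B) : Prop :=
  ∀ M : Matching I, Stable I M →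
    ((M.toFun a = some b ∧ M.toFun abar = some b) ↔ (p.1 ∈ RM M ∧ p.2 ∉ RM M))

/-- Some stable matching assigns both `a` and `ā` to `b`. -/
def goodSchool (I : SchoolInstance A B) (a abar : A) (b : B) : Prop :=
  ∃ M, Stable I M ∧ M.toFun a = some b ∧ M.toFun abar = some b

/-- The pair `(ρ_in(a,ā,b), ρ_out(a,ā,b))` (via definite description). -/
def siblingPair (I : SchoolInstance A B) (RM : Matching I → Set (Rot A B))
    (a abar : A) (b : B) : Rot A B × Rot A B :=
  Classical.epsilon fun p => p.1 ∈ RotSet I ∧ p.2 ∈ RotSet I ∧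
    siblingChar I RM a abar b p ∧ strictDom I RM p.1 p.2

/-- `R_in(a, ā)`. -/
def Rin (I : SchoolInstance A B) (RM : Matching I → Set (Rot A B))
    (a abar : A) : Set (Rot A B) :=
  {r | ∃ b, goodSchool I a abar b ∧ r = (siblingPair I RM a abar b).1}

/-- `R_out(a, ā)`. -/
def Rout (I : SchoolInstance A B) (RM : Matching I → Set (Rot A B))
    (a abar : A) : Set (Rot A B) :=
  {r | ∃ b, goodSchool I a abar b ∧ r = (siblingPair I RM a abar b).2}

/-- The indicator function: `0` when the siblings are matched to the same
school, `1` otherwise. -/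
def sibIndicator (I : SchoolInstance A B) (a abar : A) : Matching I → ℝ :=
  fun M => if M.toFun a = M.toFun abar then 0 else 1

end SM

/-!
Compare two stable matchings `M`, `M'` school by school. If a student who is better off in `M'`
is at school `d` in `M'`, stability of `M` forces `d` to be full in `M` and to prefer each of its
`M`-partners to that student. Then no student at `d` in `M` is better off in `M`, and since `d` is
full in `M`, at least as many students better off in `M'` leave `d` as arrive there. Summed over
all schools, both counts equal the number of students better off in `M'` (none of them is
unmatched in `M'`), so they agree at every school. Applied to the pair `(M', M)`, this shows that
every newcomer to `d` is better off in `M'`, so `d` prefers each of its `M`-partners to it.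
Applied to `b`, with the roles of `M` and `M'` fixed by which one `a` prefers, this gives the
theorem.
-/

namespace Finset

lemma card_eq_card_filter_none_add_sum {α β : Type*} [Fintype β] [DecidableEq β]
    (s : Finset α) (f : α → Option β) :
    #s = #{a ∈ s | f a = none} + ∑ b : β, #{a ∈ s | f a = some b} := by
  rw [card_eq_sum_card_fiberwise (f := f) (t := univ) fun _ _ => mem_univ _,
    Fintype.sum_option]

end Finset

namespace SM

section

open Finset

variable {A B : Type} [Fintype A] [Fintype B]

namespace SchoolInstance

variable (I : SchoolInstance A B)

lemma prefA_irrefl (a : A) (x : Option B) : ¬ I.prefA a x x :=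
  haveI := I.prefA_sto a
  irrefl_of _ x

lemma prefB_asymm (b : B) {x y : Option A} (h : I.prefB b x y) : ¬ I.prefB b y x :=
  haveI := I.prefB_sto b
  asymm_of _ h

lemma prefA_or_prefA_of_ne (a : A) {x y : Option B} (h : x ≠ y) :
    I.prefA a x y ∨ I.prefA a y x :=
  haveI := I.prefA_sto a
  (trichotomous_of (I.prefA a) x y).imp_right (Or.resolve_left · h)

lemma prefB_or_prefB_of_ne (b : B) {x y : Option A} (h : x ≠ y) :
    I.prefB b x y ∨ I.prefB b y x :=
  haveI := I.prefB_sto b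
  (trichotomous_of (I.prefB b) x y).imp_right (Or.resolve_left · h)

end SchoolInstance

variable [DecidableEq B] {I : SchoolInstance A B} {M M' : Matching I} {a : A} {d : B}

lemma card_assignedTo_le (M : Matching I) (d : B) : #(assignedTo I M d) ≤ I.q d := by
  unfold assignedTo
  convert M.quota d using 2
  congr!

lemma Stable.prefB_some_none (hM : Stable I M) (h : M.toFun a = some d) :
    I.prefB d (some a) none :=
  (I.prefB_or_prefB_of_ne d (Option.some_ne_none a)).resolve_right
    fun h' => hM.2.2 ⟨d, a, h, h'⟩

lemma Stable.prefB_of_prefA (hM : Stable I M) (ha : I.prefA a (some d) (M.toFun a))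
    {x : Option A} (hx : inPartners I M d x) : I.prefB d x (some a) := by
  by_cases hxa : x = some a
  · subst hxa
    rcases hx with ⟨a', ha', hMa'⟩ | ⟨h, -⟩
    · cases Option.some_inj.1 ha'
      exact absurd (hMa' ▸ ha) (I.prefA_irrefl a _)
    · cases h
  · exact (I.prefB_or_prefB_of_ne d hxa).resolve_right fun h => hM.1 ⟨a, d, ha, x, hx, h⟩

lemma Stable.not_hasSlack_of_prefA (hM : Stable I M) (hM' : Stable I M')
    (h' : M'.toFun a = some d) (ha : I.prefA a (some d) (M.toFun a)) : ¬ hasSlack I M d :=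
  fun hslack => I.prefB_asymm d (hM'.prefB_some_none h')
    (hM.prefB_of_prefA ha (Or.inr ⟨rfl, hslack⟩))

variable (I) in
def improvers (M M' : Matching I) : Finset A :=
  {a | I.prefA a (M'.toFun a) (M.toFun a)}

variable (I) in
def improvingArrivals (M M' : Matching I) (d : B) : Finset A :=
  {a ∈ improvers I M M' | M'.toFun a = some d}

variable (I) in
def improvingDepartures (M M' : Matching I) (d : B) : Finset A :=
  {a ∈ improvers I M M' | M.toFun a = some d}

lemma mem_improvingArrivals :
    a ∈ improvingArrivals I M M' d ↔
      M'.toFun a = some d ∧ I.prefA a (some d) (M.toFun a) := by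
  simp only [improvingArrivals, improvers, mem_filter, mem_univ, true_and]
  exact ⟨fun ⟨h, hd⟩ => ⟨hd, hd ▸ h⟩, fun ⟨hd, h⟩ => ⟨hd ▸ h, hd⟩⟩

lemma mem_improvingDepartures :
    a ∈ improvingDepartures I M M' d ↔
      M.toFun a = some d ∧ I.prefA a (M'.toFun a) (some d) := by
  simp only [improvingDepartures, improvers, mem_filter, mem_univ, true_and]
  exact ⟨fun ⟨h, hd⟩ => ⟨hd, hd ▸ h⟩, fun ⟨hd, h⟩ => ⟨hd ▸ h, hd⟩⟩

lemma sum_card_improvingArrivals (hM : Stable I M) :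
    ∑ d, #(improvingArrivals I M M' d) = #(improvers I M M') := by
  have hnone : {a ∈ improvers I M M' | M'.toFun a = none} = ∅ :=
    filter_eq_empty_iff.2 fun a ha hnone =>
      hM.2.1 ⟨a, show I.prefA a none (M.toFun a) from hnone ▸ (mem_filter.1 ha).2⟩
  rw [card_eq_card_filter_none_add_sum (improvers I M M') M'.toFun, hnone, card_empty, zero_add]
  rfl

lemma sum_card_improvingDepartures_le :
    ∑ d, #(improvingDepartures I M M' d) ≤ #(improvers I M M') := by
  rw [card_eq_card_filter_none_add_sum (improvers I M M') M.toFun]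
  exact Nat.le_add_left _ _

lemma improvingArrivals_swap_eq_empty (hM : Stable I M) (hM' : Stable I M')
    (h : (improvingArrivals I M M' d).Nonempty) : improvingArrivals I M' M d = ∅ := by
  obtain ⟨s, hs⟩ := h
  rw [mem_improvingArrivals] at hs
  refine eq_empty_iff_forall_notMem.2 fun t ht => ?_
  rw [mem_improvingArrivals] at ht
  exact I.prefB_asymm d (hM.prefB_of_prefA hs.2 (Or.inl ⟨t, rfl, ht.1⟩))
    (hM'.prefB_of_prefA ht.2 (Or.inl ⟨s, rfl, hs.1⟩))

lemma card_improvingArrivals_le (hM : Stable I M) (hM' : Stable I M') (d : B) :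
    #(improvingArrivals I M M' d) ≤ #(improvingDepartures I M M' d) := by
  rcases (improvingArrivals I M M' d).eq_empty_or_nonempty with h | hne
  · simp [h]
  have hstay := improvingArrivals_swap_eq_empty hM hM' hne
  obtain ⟨s, hs⟩ := hne
  rw [mem_improvingArrivals] at hs
  have hfull : ¬ hasSlack I M d := hM.not_hasSlack_of_prefA hM' hs.1 hs.2
  calc #(improvingArrivals I M M' d)
      ≤ #(assignedTo I M' d \ assignedTo I M d) := by
        refine card_le_card fun a ha => ?_
        rw [mem_improvingArrivals] at ha
        simp only [assignedTo, mem_sdiff, mem_filter, mem_univ, true_and]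
        exact ⟨ha.1, fun h => I.prefA_irrefl a _ (h ▸ ha.2)⟩
    _ ≤ #(assignedTo I M d \ assignedTo I M' d) :=
        card_sdiff_le_card_sdiff_iff.2 ((card_assignedTo_le M' d).trans (not_lt.1 hfull))
    _ ≤ #(improvingDepartures I M M' d) := by
        refine card_le_card fun a ha => ?_
        simp only [assignedTo, mem_sdiff, mem_filter, mem_univ, true_and] at ha
        refine mem_improvingDepartures.2 ⟨ha.1, ?_⟩
        refine (I.prefA_or_prefA_of_ne a ha.2).resolve_right fun h => ?_
        exact (eq_empty_iff_forall_notMem.1 hstay) a (mem_improvingArrivals.2 ⟨ha.1, h⟩)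

lemma card_improvingArrivals_eq (hM : Stable I M) (hM' : Stable I M') (d : B) :
    #(improvingArrivals I M M' d) = #(improvingDepartures I M M' d) := by
  have hle : ∀ d ∈ univ, #(improvingArrivals I M M' d) ≤ #(improvingDepartures I M M' d) :=
    fun d _ => card_improvingArrivals_le hM hM' d
  refine (sum_eq_sum_iff_of_le hle).1 (le_antisymm (sum_le_sum hle) ?_) d (mem_univ d)
  exact sum_card_improvingDepartures_le.trans (sum_card_improvingArrivals hM).ge

lemma prefersSet_of_improvingArrivals_nonempty (hM : Stable I M) (hM' : Stable I M')
    (h : (improvingArrivals I M M' d).Nonempty) :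
    prefersSet I d (partnersSet I M d) (partnersSet I M' d) := by
  have hnoDeparture : improvingDepartures I M' M d = ∅ := by
    rw [← card_eq_zero, ← card_improvingArrivals_eq hM' hM,
      improvingArrivals_swap_eq_empty hM hM' h, card_empty]
  intro x hx y hy hyx
  rcases hy with ⟨t, rfl, ht⟩ | ⟨rfl, -⟩
  · have htM : M.toFun t ≠ some d := fun h => hyx (Or.inl ⟨t, rfl, h⟩)
    have ht_better : I.prefA t (some d) (M.toFun t) := by
      refine (I.prefA_or_prefA_of_ne t (Ne.symm htM)).resolve_right fun h => ?_
      exact (eq_empty_iff_forall_notMem.1 hnoDeparture) t (mem_improvingDepartures.2 ⟨ht, h⟩)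
    exact hM.prefB_of_prefA ht_better hx
  · rcases hx with ⟨x', rfl, hx'⟩ | ⟨rfl, hslack⟩
    · exact hM.prefB_some_none hx'
    · exact absurd (Or.inr ⟨rfl, hslack⟩) hyx

end

variable {A B : Type} [Fintype A] [Fintype B] [DecidableEq A] [DecidableEq B]

/-- opposition of interest. -/
theorem stmt12 (I : SchoolInstance A B) (M M' : Matching I)
    (hM : Stable I M) (hM' : Stable I M')
    (a : A) (b : B) (hab : M.toFun a = some b) (hab' : M'.toFun a ≠ some b) :
    (I.prefA a (M.toFun a) (M'.toFun a) ∧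
      prefersSet I b (partnersSet I M' b) (partnersSet I M b)) ∨
    (I.prefA a (M'.toFun a) (M.toFun a) ∧
      prefersSet I b (partnersSet I M b) (partnersSet I M' b)) := by
  rcases I.prefA_or_prefA_of_ne a (hab ▸ Ne.symm hab') with hM_better | hM'_better
  · refine .inl ⟨hM_better, prefersSet_of_improvingArrivals_nonempty hM' hM ?_⟩
    exact ⟨a, mem_improvingArrivals.2 ⟨hab, hab ▸ hM_better⟩⟩
  · refine .inr ⟨hM'_better, prefersSet_of_improvingArrivals_nonempty hM hM' ?_⟩
    rw [← Finset.card_pos, card_improvingArrivals_eq hM hM']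
    exact Finset.card_pos.2 ⟨a, mem_improvingDepartures.2 ⟨hab, hab ▸ hM'_better⟩⟩

end SM
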